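/- Every matrix of the form a·𝟙^T + 𝟙·b^T (for a, b ∈ ℂ^N, 𝟙 the all-ones vector) is a fixed point of the Berezin transform I_U, for any unitary U with no zero entries. Consequently the eigenspace of I_U for eigenvalue 1 has dimension at least 2N−1. -/

import Mathlib

open Matrix

/-- `C_U(F) = (F ∘ U) U*` where `∘` is the Hadamard (entrywise) product. -/
noncomputable def Cmap {n : Type*} [Fintype n] (U F : Matrix n n ℂ) : Matrix n n ℂ :=
  Matrix.hadamard F U * Uᴴ

/-- `D_U(F) = U (conj(F) ∘ U)*`. -/
noncomputable def Dmap {n : Type*} [Fintype n] (U F : Matrix n n ℂ) : Matrix n n ℂ :=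
  U * (Matrix.hadamard (F.map (starRingEnd ℂ)) U)ᴴ

/-- `C_U` is injective when `U` is unitary with no zero entries. -/
lemma Cmap_inj {N : ℕ} {U : Matrix (Fin N) (Fin N) ℂ}
    (hU : Uᴴ * U = 1) (hNZ : ∀ i j, U i j ≠ 0)
    {F G : Matrix (Fin N) (Fin N) ℂ} (h : Cmap U F = Cmap U G) : F = G := by
  have h2 : Matrix.hadamard F U = Matrix.hadamard G U := by
    have := congrArg (· * U) h
    simpa [Cmap, Matrix.mul_assoc, hU] using this
  ext i j
  have := congrFun (congrFun h2 i) j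
  simp only [Matrix.hadamard_apply] at this
  exact mul_right_cancel₀ (hNZ i j) this

/-- `C_U` and `D_U` agree on matrices of the form `a 𝟙ᵀ + 𝟙 bᵀ`. -/
lemma CD_eq {N : ℕ} {U : Matrix (Fin N) (Fin N) ℂ}
    (hUU : U * Uᴴ = 1) (a b : Fin N → ℂ) :
    Cmap U (Matrix.vecMulVec a (fun _ => 1) + Matrix.vecMulVec (fun _ => 1) b)
      = Dmap U (Matrix.vecMulVec a (fun _ => 1) + Matrix.vecMulVec (fun _ => 1) b) := by
  ext i k
  have h1 : ∑ j, U i j * star (U k j) = (1 : Matrix (Fin N) (Fin N) ℂ) i k := by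
    rw [← hUU]; simp [Matrix.mul_apply, conjTranspose_apply]
  simp only [Cmap, Dmap, Matrix.mul_apply, Matrix.hadamard_apply, conjTranspose_apply,
    Matrix.add_apply, Matrix.vecMulVec_apply, Matrix.map_apply, star_mul', star_star,
    starRingEnd_apply, mul_one, one_mul]
  have lhs : ∑ j, (a i + b j) * U i j * star (U k j)
      = a i * ∑ j, U i j * star (U k j) + ∑ j, b j * (U i j * star (U k j)) := by
    rw [Finset.mul_sum, ← Finset.sum_add_distrib]; apply Finset.sum_congr rfl; intros; ring
  have rhs : ∑ j, U i j * ((a k + b j) * star (U k j))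
      = a k * ∑ j, U i j * star (U k j) + ∑ j, b j * (U i j * star (U k j)) := by
    rw [Finset.mul_sum, ← Finset.sum_add_distrib]; apply Finset.sum_congr rfl; intros; ring
  rw [lhs, rhs, h1]
  by_cases h : i = k
  · subst h; simp
  · simp [Matrix.one_apply_ne h]

/-- Every matrix `a 𝟙ᵀ + 𝟙 bᵀ` is a fixed point of the Berezin transform
`I = C_U⁻¹ ∘ D_U` of a unitary `U` with no zero entries; consequently the eigenspace
of `I` for eigenvalue `1` has dimension at least `2N - 1`. -/
theorem stmt7 {N : ℕ} (U : Matrix (Fin N) (Fin N) ℂ)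
    (hU : Uᴴ * U = 1) (hNZ : ∀ i j, U i j ≠ 0)
    (I : Matrix (Fin N) (Fin N) ℂ →ₗ[ℂ] Matrix (Fin N) (Fin N) ℂ)
    (hI : ∀ F, Cmap U (I F) = Dmap U F) :
    (∀ a b : Fin N → ℂ,
      I (Matrix.vecMulVec a (fun _ => 1) + Matrix.vecMulVec (fun _ => 1) b)
        = Matrix.vecMulVec a (fun _ => 1) + Matrix.vecMulVec (fun _ => 1) b) ∧
    2 * N - 1 ≤ Module.finrank ℂ (Module.End.eigenspace I (1 : ℂ)) := by
  have hUU : U * Uᴴ = 1 := mul_eq_one_comm.mp hU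
  have hfix : ∀ a b : Fin N → ℂ,
      I (Matrix.vecMulVec a (fun _ => 1) + Matrix.vecMulVec (fun _ => 1) b)
        = Matrix.vecMulVec a (fun _ => 1) + Matrix.vecMulVec (fun _ => 1) b := by
    intro a b
    apply Cmap_inj hU hNZ
    rw [hI _]
    exact (CD_eq hUU a b).symm
  refine ⟨hfix, ?_⟩
  rcases Nat.eq_zero_or_pos N with hN | hN
  · simp [hN]
  -- the bilinear parametrization of `T_U`
  let φ : ((Fin N → ℂ) × (Fin N → ℂ)) →ₗ[ℂ] Matrix (Fin N) (Fin N) ℂ :=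
    { toFun := fun p => Matrix.vecMulVec p.1 (fun _ => 1) + Matrix.vecMulVec (fun _ => 1) p.2
      map_add' := by
        intro p q; ext i j; simp [Matrix.vecMulVec_apply]; ring
      map_smul' := by
        intro c p; ext i j; simp [Matrix.vecMulVec_apply]; ring }
  have hmem : ∀ p, φ p ∈ Module.End.eigenspace I (1 : ℂ) := by
    intro p
    rw [Module.End.mem_eigenspace_iff, one_smul]
    exact hfix p.1 p.2
  let ψ := φ.codRestrict (Module.End.eigenspace I (1 : ℂ)) hmem
  have hrn := LinearMap.finrank_range_add_finrank_ker ψ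
  have hdom : Module.finrank ℂ ((Fin N → ℂ) × (Fin N → ℂ)) = 2 * N := by
    simp [Module.finrank_prod]; ring
  rw [hdom] at hrn
  set v : (Fin N → ℂ) × (Fin N → ℂ) := ((fun _ => 1), (fun _ => -1)) with hv
  have i0 : Fin N := ⟨0, hN⟩
  have hker : LinearMap.ker ψ ≤ Submodule.span ℂ {v} := by
    intro p hp
    have hp0 : φ p = 0 := by
      have : ψ p = 0 := hp
      have := congrArg (Subtype.val) this
      simpa [ψ, LinearMap.codRestrict] using this
    have hentry : ∀ i j, p.1 i + p.2 j = 0 := by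
      intro i j
      have := congrFun (congrFun hp0 i) j
      simpa [φ, Matrix.vecMulVec_apply] using this
    rw [Submodule.mem_span_singleton]
    refine ⟨p.1 i0, ?_⟩
    have h1 : ∀ i, p.1 i = p.1 i0 := by
      intro i
      have := hentry i i0
      have h2 := hentry i0 i0
      linear_combination this - h2
    have h2 : ∀ j, p.2 j = -(p.1 i0) := by
      intro j
      have := hentry i0 j
      linear_combination this
    ext x
    · simp [hv, h1 x]
    · simp [hv, h2 x]
  have hvne : v ≠ 0 := by
    intro h
    have := congrFun (congrArg Prod.fst h) i0
    simp [hv] at this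
  have hker1 : Module.finrank ℂ (LinearMap.ker ψ) ≤ 1 := by
    have := Submodule.finrank_mono hker
    rwa [finrank_span_singleton hvne] at this
  have hle : Module.finrank ℂ (LinearMap.range ψ) ≤
      Module.finrank ℂ (Module.End.eigenspace I (1 : ℂ)) :=
    Submodule.finrank_le _
  omega
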